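/- arXiv:2508.00269 — 6 statements merged into one kernel-verified Lean document; each statement's English description precedes it below -/
import Mathlib

section
/- Fix q ∈ V and a tree ordering of V from a spanning tree rooted at q. If D' is minimal under the order ≺ among all divisors linearly equivalent to D that are nonnegative away from q, then D' is q-reduced. -/
open Finset

/-- A finite loopless undirected multigraph on vertex set `V`, given by symmetric
edge multiplicities. -/
structure Multigraph (V : Type) where
  E : V → V → ℕ
  symm : ∀ u v, E u v = E v u
  loopless : ∀ v, E v v = 0

variable {V : Type} [Fintype V] [DecidableEq V]

/-- The valence (degree) of a vertex: number of incident edges. -/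
def Multigraph.val (G : Multigraph V) (v : V) : ℕ := ∑ w, G.E v w

/-- Connectivity of a multigraph. -/
def Multigraph.Connected (G : Multigraph V) : Prop :=
  ∀ u v : V, Relation.ReflTransGen (fun a b => 0 < G.E a b) u v

/-- Degree of a divisor. -/
def divDeg (D : V → ℤ) : ℤ := ∑ v, D v

/-- The graph Laplacian applied to a firing script. -/
def lap (G : Multigraph V) (σ : V → ℤ) : V → ℤ :=
  fun v => ∑ w, (G.E v w : ℤ) * (σ v - σ w)

/-- Lending move at `v`. -/
def lend (G : Multigraph V) (D : V → ℤ) (v : V) : V → ℤ :=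
  fun w => if w = v then D v - (G.val v : ℤ) else D w + (G.E v w : ℤ)

/-- Borrowing move at `v`. -/
def borrow (G : Multigraph V) (D : V → ℤ) (v : V) : V → ℤ :=
  fun w => if w = v then D v + (G.val v : ℤ) else D w - (G.E v w : ℤ)

/-- Linear equivalence: generated by lending moves. -/
def LinEquiv (G : Multigraph V) : (V → ℤ) → (V → ℤ) → Prop :=
  Relation.ReflTransGen (fun D D' => ∃ v, D' = lend G D v)

/-- Number of edges from `v` to vertices outside `S`. -/
def outdegS (G : Multigraph V) (S : Finset V) (v : V) : ℕ := ∑ w ∈ Sᶜ, G.E v w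

/-- Fire all vertices of `S` simultaneously once. -/
def fireSet (G : Multigraph V) (D : V → ℤ) (S : Finset V) : V → ℤ :=
  fun v => if v ∈ S then D v - (outdegS G S v : ℤ) else D v + ∑ w ∈ S, (G.E v w : ℤ)

/-- A divisor is `q`-reduced: nonnegative away from `q`, and no nonempty subset of
`V \ {q}` can be legally fired (every such `S` has a vertex with fewer chips than its
outdegree from `S`). -/
def QReduced (G : Multigraph V) (q : V) (D : V → ℤ) : Prop :=
  (∀ v, v ≠ q → 0 ≤ D v) ∧
  ∀ S : Finset V, S.Nonempty → (∀ v ∈ S, v ≠ q) → ∃ v ∈ S, D v < (outdegS G S v : ℤ)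

/-- The order `≺` induced by a tree ordering (given as an enumeration of the vertices):
smaller degree, or equal degree and bigger at the first vertex where they differ. -/
def Prec (ord : V ≃ Fin (Fintype.card V)) (A B : V → ℤ) : Prop :=
  divDeg A < divDeg B ∨
    (divDeg A = divDeg B ∧ ∃ i : Fin (Fintype.card V),
      B (ord.symm i) < A (ord.symm i) ∧ ∀ j : Fin (Fintype.card V), j < i →
        A (ord.symm j) = B (ord.symm j))

/-!
Suppose `D'` were minimal but some nonempty `S ⊆ V \ {q}` could fire legally. Firing `S`
keeps the divisor linearly equivalent, of the same degree and nonnegative away from `q`;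
it can only add chips outside `S`. The earliest vertex `v₀` of `S` has its tree parent `w`
outside `S` and earlier still, and `w` gains chips. Hence the first vertex where the two
divisors differ precedes all of `S` and gains chips there, so the fired divisor is `≺ D'`.
-/

namespace Multigraph

variable (G : Multigraph V)

lemma val_eq_sum_add_outdegS (S : Finset V) (v : V) :
    (G.val v : ℤ) = ∑ w ∈ S, (G.E v w : ℤ) + outdegS G S v := by
  rw [val, outdegS]
  push_cast
  exact (sum_add_sum_compl S _).symm

end Multigraph

section Firing

variable (G : Multigraph V) (D : V → ℤ) (S : Finset V)

lemma fireSet_apply (v : V) :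
    fireSet G D S v = D v + ∑ w ∈ S, (G.E v w : ℤ) - if v ∈ S then (G.val v : ℤ) else 0 := by
  by_cases hv : v ∈ S
  · simp only [fireSet, if_pos hv, G.val_eq_sum_add_outdegS S v]
    ring
  · simp [fireSet, hv]

lemma fireSet_insert {a : V} (ha : a ∉ S) :
    fireSet G D (insert a S) = lend G (fireSet G D S) a := by
  funext v
  simp only [fireSet_apply, lend, sum_insert ha]
  by_cases hv : v = a
  · subst hv
    simp [ha, G.loopless]
  · rw [if_neg hv, G.symm a v]
    simp only [mem_insert, hv, false_or]
    ring

lemma linEquiv_fireSet : LinEquiv G D (fireSet G D S) := by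
  induction S using Finset.induction_on with
  | empty =>
    rw [show fireSet G D ∅ = D from funext fun v => by simp [fireSet]]
    exact .refl
  | insert a S ha ih => exact ih.tail ⟨a, fireSet_insert G D S ha⟩

lemma divDeg_fireSet : divDeg (fireSet G D S) = divDeg D := by
  have hin : ∑ v, ∑ w ∈ S, (G.E v w : ℤ) = ∑ w ∈ S, (G.val w : ℤ) := by
    rw [sum_comm]
    refine sum_congr rfl fun w _ => ?_
    simp only [Multigraph.val, Nat.cast_sum, G.symm w]
  have hout : ∑ v, (if v ∈ S then (G.val v : ℤ) else 0) = ∑ w ∈ S, (G.val w : ℤ) := by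
    rw [sum_ite_mem, univ_inter]
  simp only [divDeg, fireSet_apply, sum_sub_distrib, sum_add_distrib, hin, hout]
  ring

lemma le_fireSet_of_notMem {v : V} (hv : v ∉ S) : D v ≤ fireSet G D S v := by
  simp only [fireSet, if_neg hv, le_add_iff_nonneg_right]
  positivity

lemma lt_fireSet_of_adj {v w : V} (hv : v ∉ S) (hw : w ∈ S) (hvw : 0 < G.E v w) :
    D v < fireSet G D S v := by
  have hle : (G.E v w : ℤ) ≤ ∑ u ∈ S, (G.E v u : ℤ) :=
    single_le_sum (f := fun u => (G.E v u : ℤ)) (fun _ _ => by positivity) hw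
  simp only [fireSet, if_neg hv]
  omega

lemma fireSet_nonneg {q : V} (hD : ∀ v, v ≠ q → 0 ≤ D v)
    (hlegal : ∀ v ∈ S, (outdegS G S v : ℤ) ≤ D v) :
    ∀ v, v ≠ q → 0 ≤ fireSet G D S v := by
  intro v hvq
  by_cases hv : v ∈ S
  · simpa [fireSet, hv] using hlegal v hv
  · exact (hD v hvq).trans (le_fireSet_of_notMem G D S hv)

end Firing

omit [DecidableEq V] in
lemma prec_of_lt_of_le_before (ord : V ≃ Fin (Fintype.card V)) {A B : V → ℤ}
    (hdeg : divDeg A = divDeg B) {w : V} (hw : B w < A w)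
    (hle : ∀ v, ord v ≤ ord w → B v ≤ A v) : Prec ord A B := by
  obtain ⟨u, hu, humin⟩ :=
    (univ.filter fun v => A v ≠ B v).exists_min_image (fun v => ord v) ⟨w, by simpa using hw.ne'⟩
  simp only [mem_filter, mem_univ, true_and] at hu humin
  refine Or.inr ⟨hdeg, ord u, ?_, fun j hj => ?_⟩
  · simpa using lt_of_le_of_ne (hle u (humin w hw.ne')) hu.symm
  · by_contra hne
    exact (humin _ hne).not_gt (by simpa using hj)

omit [DecidableEq V] in
lemma exists_parent_before_finset (G : Multigraph V) {q : V} (ord : V ≃ Fin (Fintype.card V))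
    (htree : ∀ v, v ≠ q → ∃ w, 0 < G.E w v ∧ ord w < ord v)
    {S : Finset V} (hS : S.Nonempty) (hSq : ∀ v ∈ S, v ≠ q) :
    ∃ w, ∃ v ∈ S, 0 < G.E w v ∧ ∀ u ∈ S, ord w < ord u := by
  obtain ⟨v, hvS, hvmin⟩ := S.exists_min_image (fun v => ord v) hS
  obtain ⟨w, hwv, hlt⟩ := htree v (hSq v hvS)
  exact ⟨w, v, hvS, hwv, fun u hu => hlt.trans_le (hvmin u hu)⟩

theorem prec_minimal_qreduced_general (G : Multigraph V) (q : V)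
    (ord : V ≃ Fin (Fintype.card V))
    (htree : ∀ v, v ≠ q → ∃ w, 0 < G.E w v ∧ ord w < ord v)
    (D D' : V → ℤ) (hequiv : LinEquiv G D D') (hpos : ∀ v, v ≠ q → 0 ≤ D' v)
    (hmin : ∀ D'' : V → ℤ, LinEquiv G D D'' → (∀ v, v ≠ q → 0 ≤ D'' v) →
      ¬ Prec ord D'' D') :
    QReduced G q D' := by
  refine ⟨hpos, fun S hS hSq => ?_⟩
  by_contra! hlegal
  obtain ⟨w, v, hvS, hwv, hw⟩ := exists_parent_before_finset G ord htree hS hSq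
  have hwS : w ∉ S := fun h => (hw w h).false
  have hprec : Prec ord (fireSet G D' S) D' :=
    prec_of_lt_of_le_before ord (divDeg_fireSet G D' S) (lt_fireSet_of_adj G D' S hwS hvS hwv)
      fun u hu => le_fireSet_of_notMem G D' S fun huS => (hu.trans_lt (hw u huS)).false
  exact hmin _ (hequiv.trans (linEquiv_fireSet G D' S)) (fireSet_nonneg G D' S hpos hlegal) hprec

/-- Fix `q ∈ V` and a tree ordering of `V` coming from a spanning tree rooted at `q`
(`q` is first, and every other vertex has a neighbor — its parent — earlier in the
order).  If `D'` is minimal under `≺` among all divisors linearly equivalent to `D`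
that are nonnegative away from `q`, then `D'` is `q`-reduced. -/
theorem prec_minimal_qreduced (G : Multigraph V) (hG : G.Connected) (q : V)
    (ord : V ≃ Fin (Fintype.card V)) (hq : (ord q : ℕ) = 0)
    (htree : ∀ v, v ≠ q → ∃ w, 0 < G.E w v ∧ ord w < ord v)
    (D D' : V → ℤ) (hequiv : LinEquiv G D D') (hpos : ∀ v, v ≠ q → 0 ≤ D' v)
    (hmin : ∀ D'' : V → ℤ, LinEquiv G D D'' → (∀ v, v ≠ q → 0 ≤ D'' v) →
      ¬ Prec ord D'' D') :
    QReduced G q D' :=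
  prec_minimal_qreduced_general G q ord htree D D' hequiv hpos hmin
end

section
/- Every divisor on a finite connected multigraph is linearly equivalent to a unique q-reduced divisor, for any fixed vertex q. -/
open Finset

variable {V : Type} [Fintype V] [DecidableEq V]

/-!
Linear equivalence means `D' = D - lap G σ` for an integer script `σ`.

Uniqueness: if `D` and `D - lap G σ` are both `q`-reduced, the set where `σ` is maximal cannot
avoid `q` (firing it would be legal for `D`), and likewise for `-σ`; so `σ` is constant.

Existence: powers of the distance to `q` give `f ≥ 0` with `f q = 0` and `lap G f ≥ 1` off `q`.
Adding a multiple of `lap G f` makes `D` nonnegative off `q`; afterwards firing any legal set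
`S` avoiding `q` lowers `∑ v, f v * D v` by `∑ v ∈ S, lap G f v ≥ 1` (the Laplacian is
self-adjoint), while this pairing stays nonnegative, so repeated firing ends at a reduced divisor.
-/

section

variable {V : Type} [Fintype V] {G : Multigraph V}

lemma lap_add (σ τ : V → ℤ) : lap G (σ + τ) = lap G σ + lap G τ := by
  ext v
  simp only [lap, Pi.add_apply, ← Finset.sum_add_distrib]
  exact Finset.sum_congr rfl fun w _ => by ring

lemma lap_sub (σ τ : V → ℤ) : lap G (σ - τ) = lap G σ - lap G τ := by
  ext v
  simp only [lap, Pi.sub_apply, ← Finset.sum_sub_distrib]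
  exact Finset.sum_congr rfl fun w _ => by ring

lemma lap_smul (c : ℤ) (σ : V → ℤ) : lap G (c • σ) = c • lap G σ := by
  ext v
  simp only [lap, Pi.smul_apply, smul_eq_mul, Finset.mul_sum]
  exact Finset.sum_congr rfl fun w _ => by ring

lemma lap_const (c : ℤ) : lap G (fun _ => c) = 0 := by
  ext v
  simp [lap]

lemma lap_zero : lap G 0 = 0 := lap_const 0

lemma sum_mul_lap_comm (σ τ : V → ℤ) :
    ∑ v, σ v * lap G τ v = ∑ v, lap G σ v * τ v := by
  have cross :
      ∑ v, ∑ w, (G.E v w : ℤ) * (σ v * τ w)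
        = ∑ v, ∑ w, (G.E v w : ℤ) * (σ w * τ v) := by
    rw [Finset.sum_comm]
    exact Finset.sum_congr rfl fun v _ => Finset.sum_congr rfl fun w _ => by rw [G.symm]
  calc ∑ v, σ v * lap G τ v
      = ∑ v, ∑ w, ((G.E v w : ℤ) * (σ v * τ v) - (G.E v w : ℤ) * (σ v * τ w)) := by
        simp only [lap, Finset.mul_sum]
        exact Finset.sum_congr rfl fun v _ => Finset.sum_congr rfl fun w _ => by ring
    _ = ∑ v, ∑ w, ((G.E v w : ℤ) * (σ v * τ v) - (G.E v w : ℤ) * (σ w * τ v)) := by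
        simp only [Finset.sum_sub_distrib, cross]
    _ = ∑ v, lap G σ v * τ v := by
        simp only [lap, Finset.sum_mul]
        exact Finset.sum_congr rfl fun v _ => Finset.sum_congr rfl fun w _ => by ring

end

section

variable {V : Type}

def Multigraph.toSimpleGraph (G : Multigraph V) : SimpleGraph V :=
  SimpleGraph.fromRel fun a b => 0 < G.E a b

variable {G : Multigraph V}

lemma Multigraph.Connected.preconnected_toSimpleGraph (hG : G.Connected) :
    G.toSimpleGraph.Preconnected := fun u v =>
  (SimpleGraph.reachable_iff_reflTransGen u v).2 <| Relation.ReflTransGen.mono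
    (fun a b (hab : 0 < G.E a b) => ⟨by rintro rfl; simp [G.loopless] at hab, .inl hab⟩) _ _
    (hG u v)

lemma Multigraph.Connected.exists_adj_dist_lt (hG : G.Connected) {q v : V} (hv : v ≠ q) :
    ∃ w, 0 < G.E v w ∧ G.toSimpleGraph.dist w q < G.toSimpleGraph.dist v q := by
  obtain ⟨p, hp⟩ := (hG.preconnected_toSimpleGraph v q).exists_walk_length_eq_dist
  cases p with
  | nil => exact absurd rfl hv
  | @cons _ w _ hadj p =>
    refine ⟨w, ?_, ?_⟩
    · rcases hadj.2 with h | h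
      · exact h
      · rwa [G.symm]
    · rw [← hp, SimpleGraph.Walk.length_cons]
      exact Nat.lt_succ_of_le (SimpleGraph.dist_le p)

variable [Fintype V]

/-- An edge from `v` towards `q` contributes at least `C ^ (N - dist v q + 1)` to the Laplacian at
`v`, while all edges at `v` together take away at most `val v * C ^ (N - dist v q)`. -/
lemma Multigraph.Connected.one_le_lap_pow_dist (hG : G.Connected) {q : V} {C : ℤ} {N : ℕ}
    (hC : ∀ u, (G.val u : ℤ) < C) (hN : ∀ u, G.toSimpleGraph.dist u q ≤ N) {v : V}
    (hv : v ≠ q) :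
    1 ≤ lap G (fun u => C ^ N - C ^ (N - G.toSimpleGraph.dist u q)) v := by
  set d := fun u => G.toSimpleGraph.dist u q
  obtain ⟨w, hvw, hdw⟩ : ∃ w, 0 < G.E v w ∧ d w < d v := hG.exists_adj_dist_lt hv
  have hC1 : 1 ≤ C := by have := hC v; omega
  have hsplit : lap G (fun u => C ^ N - C ^ (N - d u)) v
      = ∑ u, (G.E v u : ℤ) * C ^ (N - d u) - G.val v * C ^ (N - d v) := by
    simp only [lap, Multigraph.val, Nat.cast_sum, Finset.sum_mul, ← Finset.sum_sub_distrib]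
    exact Finset.sum_congr rfl fun u _ => by ring
  have hw : C * C ^ (N - d v) ≤ ∑ u, (G.E v u : ℤ) * C ^ (N - d u) :=
    calc C * C ^ (N - d v) = C ^ (N - d v + 1) := by ring
      _ ≤ C ^ (N - d w) := pow_le_pow_right₀ hC1 (by have : d v ≤ N := hN v; omega)
      _ ≤ (G.E v w : ℤ) * C ^ (N - d w) :=
        le_mul_of_one_le_left (by positivity) (by exact_mod_cast hvw)
      _ ≤ ∑ u, (G.E v u : ℤ) * C ^ (N - d u) :=
        Finset.single_le_sum (f := fun u => (G.E v u : ℤ) * C ^ (N - d u))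
          (fun u _ => by positivity) (Finset.mem_univ w)
  have hpow : 1 ≤ C ^ (N - d v) := one_le_pow₀ hC1
  rw [hsplit]
  nlinarith [hC v]

lemma Multigraph.Connected.exists_potential (hG : G.Connected) (q : V) :
    ∃ f : V → ℤ, f q = 0 ∧ (∀ v, 0 ≤ f v) ∧ ∀ v, v ≠ q → 1 ≤ lap G f v := by
  set C : ℤ := Finset.univ.sup G.val + 1
  set N := Finset.univ.sup fun u => G.toSimpleGraph.dist u q
  have hC : ∀ u, (G.val u : ℤ) < C := fun u => by
    have := Finset.le_sup (f := G.val) (Finset.mem_univ u)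
    omega
  have hN : ∀ u, G.toSimpleGraph.dist u q ≤ N := fun u =>
    Finset.le_sup (f := fun u => G.toSimpleGraph.dist u q) (Finset.mem_univ u)
  refine ⟨fun u => C ^ N - C ^ (N - G.toSimpleGraph.dist u q), by simp, fun u => ?_,
    fun v hv => hG.one_le_lap_pow_dist hC hN hv⟩
  exact sub_nonneg.2 (pow_le_pow_right₀ (by have := hC u; omega) (Nat.sub_le _ _))

end

section

variable {G : Multigraph V}

lemma fireSet_eq_sub_lap (D : V → ℤ) (S : Finset V) :
    fireSet G D S = D - lap G (fun w => if w ∈ S then 1 else 0) := by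
  ext u
  by_cases hu : u ∈ S
  · simp only [fireSet, lap, outdegS, hu, if_true, mul_sub, mul_one, Finset.sum_sub_distrib,
      Pi.sub_apply, Nat.cast_sum, mul_ite, mul_zero, Finset.sum_ite_mem, Finset.univ_inter]
    rw [← Finset.sum_compl_add_sum S]
    ring
  · simp [fireSet, lap, hu]

lemma lend_eq_sub_lap (D : V → ℤ) (v : V) : lend G D v = D - lap G (Pi.single v 1) := by
  ext u
  by_cases h : u = v
  · subst h
    simp [lend, lap, Pi.single_apply, mul_sub, Finset.sum_sub_distrib, Multigraph.val, G.loopless]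
  · simp [lend, lap, Pi.single_apply, h, G.symm u v]

lemma LinEquiv.exists_eq_sub_lap {D D' : V → ℤ} (h : LinEquiv G D D') :
    ∃ σ, D' = D - lap G σ := by
  induction h with
  | refl => exact ⟨0, by rw [lap_zero, sub_zero]⟩
  | tail _ hstep ih =>
    obtain ⟨σ, rfl⟩ := ih
    obtain ⟨v, rfl⟩ := hstep
    exact ⟨σ + Pi.single v 1, by rw [lend_eq_sub_lap, lap_add, sub_sub]⟩

lemma linEquiv_sub_lap (D : V → ℤ) (σ : V → ℤ) : LinEquiv G D (D - lap G σ) := by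
  let Reach : (V → ℤ) → Prop := fun σ => ∀ D, LinEquiv G D (D - lap G σ)
  have zero : Reach 0 := fun D => by
    rw [lap_zero, sub_zero]
    exact .refl
  have add : ∀ σ τ, Reach σ → Reach τ → Reach (σ + τ) := fun σ τ hσ hτ D => by
    rw [lap_add, ← sub_sub]
    exact (hσ D).trans (hτ _)
  have lend_v : ∀ v, Reach (Pi.single v 1) := fun v D =>
    .single ⟨v, (lend_eq_sub_lap D v).symm⟩
  -- lending from every vertex except `v` is borrowing at `v`
  have borrow_v : ∀ v, Reach (Pi.single v (-1)) := by
    intro v D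
    have hsum : ∑ u : V, Pi.single u (1 : ℤ) = fun _ => 1 := Finset.univ_sum_single _
    have : lap G (Pi.single v (-1)) = lap G (∑ u ∈ Finset.univ.erase v, Pi.single u 1) := by
      rw [Finset.sum_erase_eq_sub (Finset.mem_univ v), hsum, lap_sub, lap_const, Pi.single_neg,
        neg_eq_zero_sub, lap_sub, lap_zero]
    rw [this]
    exact Finset.sum_induction _ Reach add zero (fun u _ => lend_v u) D
  have single : ∀ v (m : ℤ), Reach (Pi.single v m) := by
    intro v m
    induction m using Int.induction_on with
    | zero => simpa using zero
    | succ n ih => rw [Pi.single_add]; exact add _ _ ih (lend_v v)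
    | pred n ih => rw [sub_eq_add_neg, Pi.single_add]; exact add _ _ ih (borrow_v v)
  exact Pi.single_induction Reach σ zero add single D

lemma outdegS_le_lap_of_isMax {σ : V → ℤ} {M : ℤ} (hM : ∀ w, σ w ≤ M) {v : V}
    (hv : σ v = M) :
    (outdegS G (Finset.univ.filter (σ · = M)) v : ℤ) ≤ lap G σ v := by
  rw [outdegS, Nat.cast_sum, lap, ← Finset.sum_compl_add_sum (Finset.univ.filter (σ · = M))]
  have outside :
      ∀ w ∈ (Finset.univ.filter (σ · = M))ᶜ,
        (G.E v w : ℤ) ≤ G.E v w * (σ v - σ w) := by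
    intro w hw
    have : σ w < M := lt_of_le_of_ne (hM w) (by simpa using hw)
    exact le_mul_of_one_le_right (by positivity) (by omega)
  have inside : ∀ w ∈ Finset.univ.filter (σ · = M), (G.E v w : ℤ) * (σ v - σ w) = 0 := by
    intro w hw
    simp_all
  rw [Finset.sum_eq_zero inside, add_zero]
  exact Finset.sum_le_sum outside

lemma QReduced.apply_le_apply_of_sub_lap_nonneg {q : V} {D σ : V → ℤ} (hD : QReduced G q D)
    (hσ : ∀ v, v ≠ q → 0 ≤ D v - lap G σ v) (v : V) : σ v ≤ σ q := by
  by_contra! hlt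
  obtain ⟨v₀, -, hv₀⟩ := Finset.exists_max_image Finset.univ σ ⟨q, Finset.mem_univ q⟩
  set S := Finset.univ.filter (σ · = σ v₀)
  have hSq : ∀ u ∈ S, u ≠ q := by
    rintro u hu rfl
    have := hv₀ v (Finset.mem_univ v)
    simp only [S, Finset.mem_filter, Finset.mem_univ, true_and] at hu
    omega
  obtain ⟨u, hu, hlegal⟩ := hD.2 S ⟨v₀, by simp [S]⟩ hSq
  have : (outdegS G S u : ℤ) ≤ lap G σ u :=
    outdegS_le_lap_of_isMax (fun w => hv₀ w (Finset.mem_univ w)) (Finset.mem_filter.1 hu).2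
  have := hσ u (hSq u hu)
  omega

lemma QReduced.eq_of_linEquiv {q : V} {D D₁ D₂ : V → ℤ} (h₁ : LinEquiv G D D₁)
    (h₂ : LinEquiv G D D₂) (r₁ : QReduced G q D₁) (r₂ : QReduced G q D₂) :
    D₁ = D₂ := by
  obtain ⟨σ₁, rfl⟩ := h₁.exists_eq_sub_lap
  obtain ⟨σ₂, rfl⟩ := h₂.exists_eq_sub_lap
  have le₁ := r₁.apply_le_apply_of_sub_lap_nonneg (σ := σ₂ - σ₁) fun v hv => by
    simpa [lap_sub] using r₂.1 v hv
  have le₂ := r₂.apply_le_apply_of_sub_lap_nonneg (σ := σ₁ - σ₂) fun v hv => by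
    simpa [lap_sub] using r₁.1 v hv
  have hconst : σ₂ - σ₁ = fun _ => (σ₂ - σ₁) q := by
    ext v
    have := le₁ v
    have := le₂ v
    simp only [Pi.sub_apply] at *
    omega
  have : lap G σ₂ = lap G σ₁ := by
    rw [← sub_eq_zero, ← lap_sub, hconst, lap_const]
  rw [this]

lemma sum_mul_fireSet_lt {f D : V → ℤ} {S : Finset V} (hS : S.Nonempty)
    (hf : ∀ v ∈ S, 1 ≤ lap G f v) : ∑ v, f v * fireSet G D S v < ∑ v, f v * D v := by
  have hdrop :
      ∑ v, f v * lap G (fun w => if w ∈ S then 1 else 0) v = ∑ v ∈ S, lap G f v := by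
    rw [sum_mul_lap_comm]
    simp
  have hpos : 0 < ∑ v ∈ S, lap G f v :=
    Finset.sum_pos (fun v hv => lt_of_lt_of_le one_pos (hf v hv)) hS
  simp only [fireSet_eq_sub_lap, Pi.sub_apply, mul_sub, Finset.sum_sub_distrib, hdrop]
  omega

lemma fireSet_nonneg_s10 {D : V → ℤ} {S : Finset V} (hS : ∀ u ∈ S, (outdegS G S u : ℤ) ≤ D u)
    {v : V} (hv : 0 ≤ D v) : 0 ≤ fireSet G D S v := by
  unfold fireSet
  split_ifs with hvS
  · exact sub_nonneg.2 (hS v hvS)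
  · exact add_nonneg hv (Finset.sum_nonneg fun _ _ => by positivity)

lemma Multigraph.Connected.exists_linEquiv_nonneg (hG : G.Connected) (q : V) (D : V → ℤ) :
    ∃ D', LinEquiv G D D' ∧ ∀ v, v ≠ q → 0 ≤ D' v := by
  obtain ⟨f, -, -, hf⟩ := hG.exists_potential q
  set K := ∑ u, |D u|
  refine ⟨D - lap G (-K • f), linEquiv_sub_lap D _, fun v hv => ?_⟩
  have hK : -D v ≤ K := (neg_le_abs _).trans
    (Finset.single_le_sum (f := fun u => |D u|) (fun u _ => abs_nonneg _) (Finset.mem_univ v))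
  have : K ≤ K * lap G f v :=
    le_mul_of_one_le_right (Finset.sum_nonneg fun u _ => abs_nonneg (D u)) (hf v hv)
  simp only [lap_smul, Pi.sub_apply, Pi.smul_apply, smul_eq_mul]
  linarith

lemma Multigraph.Connected.exists_linEquiv_qReduced_of_nonneg (hG : G.Connected) (q : V)
    (D : V → ℤ) (hD : ∀ v, v ≠ q → 0 ≤ D v) :
    ∃ D', LinEquiv G D D' ∧ QReduced G q D' := by
  obtain ⟨f, hfq, hf0, hf⟩ := hG.exists_potential q
  have pairing_nonneg :
      ∀ D : V → ℤ, (∀ v, v ≠ q → 0 ≤ D v) → 0 ≤ ∑ v, f v * D v :=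
    fun D hD => Finset.sum_nonneg fun v _ => by
      rcases eq_or_ne v q with rfl | hv
      · simp [hfq]
      · exact mul_nonneg (hf0 v) (hD v hv)
  induction hn : (∑ v, f v * D v).toNat using Nat.strong_induction_on generalizing D with
  | _ n ih =>
    by_cases hred : QReduced G q D
    · exact ⟨D, .refl, hred⟩
    simp only [QReduced, not_and, not_forall, not_exists, not_lt] at hred
    obtain ⟨S, hS, hSq, hlegal⟩ := hred hD
    have hD' : ∀ v, v ≠ q → 0 ≤ fireSet G D S v := fun v hv => fireSet_nonneg_s10 hlegal (hD v hv)
    have hlt := sum_mul_fireSet_lt (D := D) hS fun v hv => hf v (hSq v hv)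
    obtain ⟨D', hDD', hD'red⟩ :=
      ih _ (by have := pairing_nonneg _ hD'; omega) (fireSet G D S) hD' rfl
    exact ⟨D', (fireSet_eq_sub_lap D S ▸ linEquiv_sub_lap D _).trans hDD', hD'red⟩

end

/-- Every divisor on a finite connected multigraph is linearly equivalent to a unique
`q`-reduced divisor, for any fixed vertex `q`. -/
theorem exists_unique_qreduced (G : Multigraph V) (hG : G.Connected) (q : V)
    (D : V → ℤ) : ∃! D' : V → ℤ, LinEquiv G D D' ∧ QReduced G q D' := by
  obtain ⟨D₁, hDD₁, hD₁⟩ := hG.exists_linEquiv_nonneg q D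
  obtain ⟨D', hD₁D', hD'⟩ := hG.exists_linEquiv_qReduced_of_nonneg q D₁ hD₁
  exact ⟨D', ⟨hDD₁.trans hD₁D', hD'⟩, fun D'' ⟨hDD'', hD''⟩ =>
    QReduced.eq_of_linEquiv hDD'' (hDD₁.trans hD₁D') hD'' hD'⟩
end

section
/- Dhar's burning algorithm is correct: given a nonnegative configuration c on V\{q}, the set of vertices unburnt at termination is a legal firing set for c, and this set is empty if and only if c is superstable. -/
open Finset

variable {V : Type} [Fintype V] [DecidableEq V]

/-- A configuration (with respect to `q`) is superstable if it is nonnegative away from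
`q` and no nonempty subset of `V \ {q}` is a legal firing set. -/
def Superstable (G : Multigraph V) (q : V) (c : V → ℤ) : Prop :=
  (∀ v, v ≠ q → 0 ≤ c v) ∧
  ∀ S : Finset V, S.Nonempty → (∀ v ∈ S, v ≠ q) →
    ¬ (∀ v ∈ S, 0 ≤ c v - (outdegS G S v : ℤ))

/-- `B` is a terminal burnt set for Dhar's burning algorithm started at `q`:
`q` is burnt, and no unburnt vertex has fewer firefighters than burning incident
edges. -/
def BurnTerminal (G : Multigraph V) (q : V) (c : V → ℤ) (B : Finset V) : Prop :=
  q ∈ B ∧ ∀ v, v ∉ B → (∑ w ∈ B, (G.E v w : ℤ)) ≤ c v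

/-- Correctness of Dhar's burning algorithm: if `B` is the set of burnt vertices at
termination (i.e. the least terminal burnt set), then the unburnt set `S = Bᶜ`
consists of non-`q` vertices and is a legal firing set for the nonnegative
configuration `c`, and `S` is empty iff `c` is superstable. -/
theorem dhar_correct (G : Multigraph V) (hG : G.Connected) (q : V) (c : V → ℤ)
    (hc : ∀ v, v ≠ q → 0 ≤ c v) (B : Finset V) (hB : BurnTerminal G q c B)
    (hmin : ∀ B' : Finset V, BurnTerminal G q c B' → B ⊆ B') :
    (∀ v ∈ Bᶜ, v ≠ q) ∧ (∀ v ∈ Bᶜ, 0 ≤ c v - (outdegS G Bᶜ v : ℤ)) ∧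
      (Bᶜ = ∅ ↔ Superstable G q c) := by
  obtain ⟨hqB, hterm⟩ := hB
  have h1 : ∀ v ∈ Bᶜ, v ≠ q := by
    intro v hv h
    exact (mem_compl.mp hv) (h ▸ hqB)
  have h2 : ∀ v ∈ Bᶜ, 0 ≤ c v - (outdegS G Bᶜ v : ℤ) := by
    intro v hv
    have ht := hterm v (mem_compl.mp hv)
    have he : (outdegS G Bᶜ v : ℤ) = ∑ w ∈ B, (G.E v w : ℤ) := by
      simp [outdegS, compl_compl, Nat.cast_sum]
    linarith
  refine ⟨h1, h2, ?_, ?_⟩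
  · intro hBc
    refine ⟨hc, ?_⟩
    intro S hS hSq hlegal
    have hB' : BurnTerminal G q c Sᶜ := by
      refine ⟨mem_compl.mpr (fun hq => hSq q hq rfl), ?_⟩
      intro v hv
      have hvS : v ∈ S := by simpa using hv
      have := hlegal v hvS
      have he : (outdegS G S v : ℤ) = ∑ w ∈ Sᶜ, (G.E v w : ℤ) := by
        simp [outdegS, Nat.cast_sum]
      linarith
    have hsub := hmin Sᶜ hB'
    have hBu : B = univ := (compl_eq_empty_iff B).mp hBc
    have : Sᶜ = univ := univ_subset_iff.mp (hBu ▸ hsub)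
    have hSe : S = ∅ := by simpa using congrArg compl this
    exact hS.ne_empty hSe
  · intro hsup
    by_contra hne
    have hSne : Bᶜ.Nonempty := nonempty_iff_ne_empty.mpr hne
    exact hsup.2 Bᶜ hSne h1 h2
end

section
/- An acyclic orientation of a finite multigraph is determined by its indegree sequence: if O and O' are acyclic orientations with indeg_O(v) = indeg_{O'}(v) for all vertices v, then O = O'. -/
open Finset

variable {V : Type} [Fintype V] [DecidableEq V]

/-- An orientation of a multigraph: each of the `G.E u v` edges between `u` and `v` is
directed, `dir u v` of them from `u` to `v`. -/
structure GraphOrientation (G : Multigraph V) where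
  dir : V → V → ℕ
  compat : ∀ u v, dir u v + dir v u = G.E u v

/-- Indegree of a vertex under an orientation. -/
def GraphOrientation.indeg {G : Multigraph V} (O : GraphOrientation G) (v : V) : ℕ := ∑ u, O.dir u v

/-- Outdegree of a vertex under an orientation. -/
def GraphOrientation.outdeg {G : Multigraph V} (O : GraphOrientation G) (v : V) : ℕ := ∑ u, O.dir v u

/-- An orientation is acyclic if it has no directed cycle. -/
def GraphOrientation.Acyclic {G : Multigraph V} (O : GraphOrientation G) : Prop :=
  ∀ v, ¬ Relation.TransGen (fun a b => 0 < O.dir a b) v v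

/-- An acyclic orientation of a finite multigraph is determined by its indegree
sequence. -/
theorem acyclic_orientation_indeg_determines (G : Multigraph V) (O O' : GraphOrientation G)
    (hO : O.Acyclic) (hO' : O'.Acyclic) (h : ∀ v, O.indeg v = O'.indeg v) : O = O' := by
  set f : V → V → ℤ := fun u v => (O.dir u v : ℤ) - O'.dir u v with hf
  have hanti : ∀ u v, f u v = - f v u := by
    intro u v
    have h1 := O.compat u v
    have h2 := O'.compat u v
    simp only [hf]
    omega
  have hcons : ∀ v, ∑ u, f u v = 0 := by
    intro v
    have := h v
    simp only [GraphOrientation.indeg] at this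
    have hc := congrArg (Nat.cast : ℕ → ℤ) this
    push_cast at hc
    simp only [hf, Finset.sum_sub_distrib, hc, sub_self]
  have hpos : ∀ u v, 0 < f u v → 0 < O.dir u v := by
    intro u v huv
    simp only [hf] at huv
    omega
  -- main claim: f is identically zero
  have key : ∀ u v, ¬ (0 < f u v) := by
    intro a b hab
    set S := {v : V // ∃ u, 0 < f u v} with hS
    have step : ∀ t : S, ∃ w : S, 0 < f t.1 w.1 := by
      rintro ⟨v, u, huv⟩
      by_contra hcon
      push_neg at hcon
      have hall : ∀ w ∈ (Finset.univ : Finset V), 0 ≤ f w v := by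
        intro w _
        by_contra hw
        push_neg at hw
        have : 0 < f v w := by rw [hanti]; omega
        exact absurd (hcon ⟨w, ⟨v, this⟩⟩) (by simpa using this)
      have hex : ∃ w ∈ (Finset.univ : Finset V), 0 < f w v := ⟨u, Finset.mem_univ u, huv⟩
      have := Finset.sum_pos' hall hex
      rw [hcons v] at this
      exact lt_irrefl 0 this
    choose st hst using step
    set s : ℕ → S := fun n => st^[n] ⟨b, a, hab⟩ with hs
    have hstep : ∀ n, 0 < f (s n).1 (s (n+1)).1 := by
      intro n
      have : s (n+1) = st (s n) := by
        simp only [hs, Function.iterate_succ_apply']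
      rw [this]
      exact hst (s n)
    have chain0 : ∀ n k,
        Relation.TransGen (fun x y => 0 < O.dir x y) (s n).1 (s (n + 1 + k)).1 := by
      intro n k
      induction k with
      | zero => exact Relation.TransGen.single (hpos _ _ (hstep n))
      | succ m ih => exact ih.tail (hpos _ _ (hstep (n + 1 + m)))
    have chain : ∀ n m, n < m →
        Relation.TransGen (fun x y => 0 < O.dir x y) (s n).1 (s m).1 := by
      intro n m hnm
      obtain ⟨k, rfl⟩ : ∃ k, m = n + 1 + k := ⟨m - (n+1), by omega⟩
      exact chain0 n k
    obtain ⟨i, j, hne, hij⟩ := Finite.exists_ne_map_eq_of_infinite s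
    rcases hne.lt_or_gt with hlt | hlt
    · exact hO (s i).1 (hij ▸ chain i j hlt)
    · exact hO (s j).1 (hij ▸ chain j i hlt)
  have hdir : ∀ u v, O.dir u v = O'.dir u v := by
    intro u v
    have h1 := key u v
    have h2 := key v u
    rw [hanti] at h2
    simp only [hf] at h1 h2
    omega
  obtain ⟨d, c⟩ := O
  obtain ⟨d', c'⟩ := O'
  simp only [GraphOrientation.mk.injEq]
  funext u v
  exact hdir u v
end

section
/- Fix q ∈ V. The map O ↦ c(O), where c(O)(v) = indeg_O(v) − 1 for v ≠ q, is a bijection between acyclic orientations of G with unique source q and maximal superstable configurations with respect to q. -/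
open Finset

variable {V : Type} [Fintype V] [DecidableEq V]

/-- The number of edges of the multigraph. -/
def edgeCount (G : Multigraph V) : ℕ := (∑ u, ∑ w, G.E u w) / 2

/-- The genus of the multigraph, `g = |E| - |V| + 1`. -/
def genus (G : Multigraph V) : ℤ := (edgeCount G : ℤ) - (Fintype.card V : ℤ) + 1

variable (q : V)

/-- Outdegree of `v ∈ S` with respect to a set `S` of non-`q` vertices: the number of
edges from `v` to vertices outside `S`. -/
def outdegC (G : Multigraph V) (S : Finset {v : V // v ≠ q}) (v : {v : V // v ≠ q}) : ℤ :=
  (G.val v.1 : ℤ) - ∑ w ∈ S, (G.E v.1 w.1 : ℤ)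

/-- A configuration `c : V \ {q} → ℤ` is superstable: nonnegative, and every nonempty
`S ⊆ V \ {q}` contains a vertex `v` with `c v < outdeg_S v`. -/
def SuperstableC (G : Multigraph V) (c : {v : V // v ≠ q} → ℤ) : Prop :=
  (∀ v, 0 ≤ c v) ∧
  ∀ S : Finset {v : V // v ≠ q}, S.Nonempty → ∃ v ∈ S, c v < outdegC q G S v

/-- A maximal superstable configuration. -/
def MaximalSuperstableC (G : Multigraph V) (c : {v : V // v ≠ q} → ℤ) : Prop :=
  SuperstableC q G c ∧
    ∀ c' : {v : V // v ≠ q} → ℤ, SuperstableC q G c' → (∀ v, c v ≤ c' v) → c' = c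

/-!
Both directions rest on Dhar's burning picture. An acyclic orientation with unique source `q`
gives a superstable configuration: every nonempty `S ⊆ V \ {q}` has a source `v` for the
orientation restricted to `S`, and all `indeg v` edges entering `v` come from outside `S`.
Conversely, superstability lets one burn the vertices one at a time starting from `q`, each new
vertex `v` having more than `c v` edges to the already burnt ones; orienting every edge from the
earlier to the later burnt endpoint gives an acyclic orientation `O` with unique source `q` and
`c ≤ c(O)`. Since `∑ indeg = |E|` for every orientation, `c(O) ≤ c(O')` forces equality, which
gives maximality; and two orientations with the same indegrees, one of them acyclic, coincide.
-/

theorem exists_source_of_acyclic {α : Type*} [Finite α] {R : α → α → Prop}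
    (hR : ∀ a, ¬ Relation.TransGen R a a) {S : Finset α} (hS : S.Nonempty) :
    ∃ a ∈ S, ∀ b ∈ S, ¬ R b a := by
  have : IsTrans α (Relation.TransGen R) := ⟨fun _ _ _ => Relation.TransGen.trans⟩
  have : Std.Irrefl (Relation.TransGen R) := ⟨hR⟩
  obtain ⟨a, ha, hmin⟩ :=
    (Finite.wellFounded_of_trans_of_irrefl (Relation.TransGen R)).has_min (S : Set α) hS
  exact ⟨a, ha, fun b hb hba => hmin b hb (.single hba)⟩

theorem outdegC_eq_sum_compl (G : Multigraph V) (S : Finset {v : V // v ≠ q})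
    (v : {v : V // v ≠ q}) :
    outdegC q G S v = ((∑ u ∈ (S.map (Function.Embedding.subtype _))ᶜ, G.E v.1 u : ℕ) : ℤ) := by
  have hsplit := sum_add_sum_compl (S.map (Function.Embedding.subtype _)) (G.E v.1)
  rw [sum_map] at hsplit
  unfold outdegC Multigraph.val
  rw [← hsplit]
  push_cast
  simp only [Function.Embedding.subtype_apply, add_sub_cancel_left]

namespace GraphOrientation

variable {G : Multigraph V}

omit [DecidableEq V] in
theorem outdeg_add_indeg (O : GraphOrientation G) (v : V) :
    O.outdeg v + O.indeg v = G.val v := by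
  rw [outdeg, indeg, ← sum_add_distrib]
  exact sum_congr rfl fun w _ => O.compat v w

omit [DecidableEq V] in
theorem sum_indeg (O : GraphOrientation G) : ∑ v, O.indeg v = edgeCount G := by
  have hio : ∑ v, O.outdeg v = ∑ v, O.indeg v := sum_comm
  have hval : ∑ v, (O.outdeg v + O.indeg v) = ∑ u, ∑ w, G.E u w :=
    sum_congr rfl fun v _ => O.outdeg_add_indeg v
  rw [sum_add_distrib] at hval
  unfold edgeCount
  omega

omit [DecidableEq V] in
theorem Acyclic.exists_source {O : GraphOrientation G} (hO : O.Acyclic) {S : Finset V}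
    (hS : S.Nonempty) : ∃ v ∈ S, ∀ w ∈ S, O.dir w v = 0 := by
  simpa using exists_source_of_acyclic hO hS

omit [DecidableEq V] in
/-- If `O'.dir v x < O.dir v x` for some `x`, pick such a `v` that is a source of `O` among all
such vertices. Then every edge into `v` carries at least as much under `O'` as under `O`, so equal
indegrees force `O'.dir x v = O.dir x v`, contradicting `O'.dir v x < O.dir v x`. -/
theorem Acyclic.eq_of_indeg_eq {O O' : GraphOrientation G} (hO : O.Acyclic)
    (h : ∀ v, O.indeg v = O'.indeg v) : O = O' := by
  have hle : ∀ u w, O.dir u w ≤ O'.dir u w := by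
    by_contra! hex
    set S := univ.filter fun u => ∃ w, O'.dir u w < O.dir u w
    obtain ⟨v, hvS, hsrc⟩ := hO.exists_source (S := S) (by simpa [S, Finset.Nonempty] using hex)
    have hin : ∀ u ∈ univ, O.dir u v ≤ O'.dir u v := by
      intro u _
      by_contra! hu
      exact hu.ne_bot (hsrc u (by simp only [S, mem_filter, mem_univ, true_and]; exact ⟨v, hu⟩))
    have heq := (sum_eq_sum_iff_of_le hin).1 (h v)
    obtain ⟨x, hx⟩ := (mem_filter.1 hvS).2
    have := heq x (mem_univ x)
    have := O.compat v x
    have := O'.compat v x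
    omega
  have hdir : O.dir = O'.dir := by
    funext u w
    have := hle w u
    have := O.compat u w
    have := O'.compat u w
    exact (hle u w).antisymm (by omega)
  cases O
  cases O'
  congr

def ofRank (G : Multigraph V) (r : V → ℕ) (hr : Function.Injective r) : GraphOrientation G where
  dir u v := if r u < r v then G.E u v else 0
  compat u v := by
    rcases lt_trichotomy (r u) (r v) with h | h | h
    · simp [h, h.not_gt]
    · obtain rfl := hr h
      simp [G.loopless]
    · simp [h, h.not_gt, G.symm v u]

variable {r : V → ℕ} {hr : Function.Injective r}

omit [Fintype V] [DecidableEq V] in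
theorem ofRank_acyclic : (ofRank G r hr).Acyclic := fun v hv => by
  have hmono : ∀ a b, 0 < (ofRank G r hr).dir a b → r a < r b := fun a b hab => by
    by_contra h
    simp [ofRank, h] at hab
  have := Relation.TransGen.lift r hmono v v hv
  rw [Function.onFun, Relation.transGen_eq_self] at this
  exact lt_irrefl _ this

omit [DecidableEq V] in
theorem indeg_ofRank (v : V) : (ofRank G r hr).indeg v = ∑ u with r u < r v, G.E v u := by
  rw [sum_filter]
  exact sum_congr rfl fun u _ => by rw [G.symm]; rfl

def toConfig (O : GraphOrientation G) : {v : V // v ≠ q} → ℤ := fun v => (O.indeg v.1 : ℤ) - 1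

omit [DecidableEq V] in
@[simp]
theorem toConfig_apply (O : GraphOrientation G) (v : {v : V // v ≠ q}) :
    O.toConfig q v = (O.indeg v.1 : ℤ) - 1 := rfl

def IsAcyclicWithUniqueSource (O : GraphOrientation G) : Prop :=
  O.Acyclic ∧ O.indeg q = 0 ∧ ∀ v, O.indeg v = 0 → v = q

variable {q}

theorem superstableC_toConfig {O : GraphOrientation G} (hO : O.Acyclic)
    (hsrc : ∀ v, O.indeg v = 0 → v = q) : SuperstableC q G (O.toConfig q) := by
  refine ⟨fun v => ?_, fun S hS => ?_⟩
  · have : O.indeg v.1 ≠ 0 := fun h => v.2 (hsrc v.1 h)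
    simp only [toConfig_apply]
    omega
  obtain ⟨_, hvS, hsrc⟩ := hO.exists_source (hS.map (f := Function.Embedding.subtype _))
  obtain ⟨v, hv, rfl⟩ := mem_map.1 hvS
  refine ⟨v, hv, ?_⟩
  suffices O.indeg v ≤ ∑ u ∈ (S.map (Function.Embedding.subtype _))ᶜ, G.E v.1 u by
    rw [toConfig_apply, outdegC_eq_sum_compl]
    omega
  calc O.indeg v = ∑ u ∈ (S.map (Function.Embedding.subtype _))ᶜ, O.dir u v :=
        (sum_subset (subset_univ _) fun u _ hu => hsrc u (by simpa using hu)).symm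
    _ ≤ ∑ u ∈ (S.map (Function.Embedding.subtype _))ᶜ, G.E v.1 u :=
        sum_le_sum fun u _ => G.symm u v ▸ O.compat u v ▸ Nat.le_add_right _ _

end GraphOrientation

section Burning

variable {q} {G : Multigraph V} {c : {v : V // v ≠ q} → ℤ}

/-- A ranking of the burnt set `T` in Dhar's burning algorithm: `q` burns first, and every other
`v ∈ T` has more than `c v` edges to vertices of `T` burnt before it. -/
def IsBurningRank (G : Multigraph V) (c : {v : V // v ≠ q} → ℤ) (T : Finset V) (r : V → ℕ) :
    Prop :=
  Set.InjOn r T ∧ (∀ v ∈ T, r q ≤ r v) ∧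
    ∀ v (hv : v ≠ q), v ∈ T → c ⟨v, hv⟩ < ((∑ u ∈ T with r u < r v, G.E v u : ℕ) : ℤ)

omit [Fintype V] [DecidableEq V] in
theorem isBurningRank_singleton (r : V → ℕ) : IsBurningRank G c {q} r :=
  ⟨by simp only [coe_singleton, Set.injOn_singleton], by simp,
    fun v hv hvT => absurd (mem_singleton.1 hvT) hv⟩

omit [Fintype V] in
theorem IsBurningRank.insert {T : Finset V} {r : V → ℕ} (h : IsBurningRank G c T r)
    (hq : q ∈ T) {v : V} (hvT : v ∉ T) (hvq : v ≠ q)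
    (hcv : c ⟨v, hvq⟩ < ((∑ u ∈ T, G.E v u : ℕ) : ℤ)) :
    IsBurningRank G c (insert v T) (Function.update r v (T.sup r + 1)) := by
  set r' := Function.update r v (T.sup r + 1)
  have hr'T : ∀ u ∈ T, r' u = r u := fun u hu =>
    Function.update_of_ne (ne_of_mem_of_not_mem hu hvT) _ _
  have hr'v : ∀ u ∈ T, r' u < r' v := fun u hu => by
    rw [hr'T u hu, show r' v = T.sup r + 1 from Function.update_self ..]
    exact Nat.lt_succ_of_le (le_sup hu)
  refine ⟨?_, ?_, ?_⟩
  · rw [coe_insert, Set.injOn_insert (mod_cast hvT)]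
    refine ⟨h.1.congr fun u hu => (hr'T u hu).symm, ?_⟩
    rintro ⟨u, hu, hru⟩
    exact (hr'v u hu).ne hru
  · simp only [mem_insert, forall_eq_or_imp, hr'T q hq]
    exact ⟨(hr'T q hq ▸ hr'v q hq).le, fun u hu => hr'T u hu ▸ h.2.1 u hu⟩
  · intro w hwq hw
    rcases mem_insert.1 hw with rfl | hwT
    · convert hcv using 3
      rw [filter_insert, if_neg (lt_irrefl _), filter_true_of_mem hr'v]
    · convert h.2.2 w hwq hwT using 3
      rw [filter_insert, if_neg (hr'v w hwT).not_gt]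
      exact filter_congr fun u hu => by rw [hr'T u hu, hr'T w hwT]

theorem SuperstableC.exists_lt_sum_of_ne_univ (hc : SuperstableC q G c) {T : Finset V}
    (hq : q ∈ T) (hT : T ≠ univ) :
    ∃ v ∉ T, ∃ hvq : v ≠ q, c ⟨v, hvq⟩ < ((∑ u ∈ T, G.E v u : ℕ) : ℤ) := by
  set S : Finset {v : V // v ≠ q} := univ.filter fun w => w.1 ∉ T
  have hS : S.map (Function.Embedding.subtype _) = Tᶜ := by
    ext u
    simp only [S, mem_map, mem_filter, mem_univ, true_and, Function.Embedding.subtype_apply,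
      mem_compl, Subtype.exists, exists_and_right, exists_eq_right]
    exact ⟨fun ⟨_, hu⟩ => hu, fun hu => ⟨ne_of_mem_of_not_mem hq hu ∘ Eq.symm, hu⟩⟩
  obtain ⟨v, hvS, hv⟩ := hc.2 S (by
    obtain ⟨u, hu⟩ : ∃ u, u ∉ T := by simpa [eq_univ_iff_forall] using hT
    exact ⟨⟨u, ne_of_mem_of_not_mem hq hu ∘ Eq.symm⟩, by simpa [S] using hu⟩)
  rw [outdegC_eq_sum_compl, hS, compl_compl] at hv
  exact ⟨v.1, (mem_filter.1 hvS).2, v.2, hv⟩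

theorem SuperstableC.exists_isBurningRank_univ (hc : SuperstableC q G c) :
    ∃ r, IsBurningRank G c univ r := by
  suffices ∀ T : Finset V, #T ≤ Fintype.card V → q ∈ T → (∃ r, IsBurningRank G c T r) →
      ∃ r, IsBurningRank G c univ r from
    this {q} (card_le_univ _) (mem_singleton_self q) ⟨fun _ => 0, isBurningRank_singleton _⟩
  refine Finset.strongDownwardInduction fun T ih _ hq ⟨r, hr⟩ => ?_
  by_cases hT : T = univ
  · exact ⟨r, hT ▸ hr⟩
  obtain ⟨v, hvT, hvq, hcv⟩ := hc.exists_lt_sum_of_ne_univ hq hT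
  exact ih (card_le_univ _) (ssubset_insert hvT) (mem_insert_of_mem hq)
    ⟨_, hr.insert hq hvT hvq hcv⟩

end Burning

namespace GraphOrientation

variable {q} {G : Multigraph V}

theorem _root_.SuperstableC.exists_le_toConfig {c : {v : V // v ≠ q} → ℤ}
    (hc : SuperstableC q G c) :
    ∃ O : GraphOrientation G, O.IsAcyclicWithUniqueSource q ∧ ∀ v, c v ≤ O.toConfig q v := by
  obtain ⟨r, hinj, hrq, hlt⟩ := hc.exists_isBurningRank_univ
  have hr : Function.Injective r := Set.injOn_univ.1 (by simpa using hinj)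
  have hlt_indeg : ∀ v, c v < (ofRank G r hr).indeg v.1 := fun v => by
    rw [indeg_ofRank]
    exact hlt v.1 v.2 (mem_univ _)
  refine ⟨ofRank G r hr, ⟨ofRank_acyclic, ?_, fun v hv => ?_⟩, fun v => ?_⟩
  · rw [indeg_ofRank]
    exact sum_eq_zero fun u hu => absurd (mem_filter.1 hu).2 (hrq u (mem_univ u)).not_gt
  · by_contra hvq
    have := hc.1 ⟨v, hvq⟩
    have : c ⟨v, hvq⟩ < (ofRank G r hr).indeg v := hlt_indeg _
    omega
  · have := hlt_indeg v
    rw [toConfig_apply]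
    omega

theorem IsAcyclicWithUniqueSource.maximalSuperstableC_toConfig {O : GraphOrientation G}
    (hO : O.IsAcyclicWithUniqueSource q) : MaximalSuperstableC q G (O.toConfig q) := by
  refine ⟨superstableC_toConfig hO.1 hO.2.2, fun c' hc' hle => ?_⟩
  obtain ⟨O', hO', hge⟩ := hc'.exists_le_toConfig
  have hind : ∀ v ∈ univ, O.indeg v ≤ O'.indeg v := fun v _ => by
    by_cases hvq : v = q
    · simp [hvq, hO.2.1]
    · have := (hle ⟨v, hvq⟩).trans (hge ⟨v, hvq⟩)
      simp only [toConfig_apply] at this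
      omega
  have heq := (sum_eq_sum_iff_of_le hind).1 (by rw [sum_indeg, sum_indeg])
  funext v
  have := heq v (mem_univ _)
  have := hle v
  have := hge v
  simp only [toConfig_apply] at *
  omega

theorem toConfig_injOn :
    Set.InjOn (toConfig q) {O : GraphOrientation G | O.IsAcyclicWithUniqueSource q} := by
  intro O hO O' hO' h
  refine hO.1.eq_of_indeg_eq fun v => ?_
  by_cases hvq : v = q
  · rw [hvq, hO.2.1, hO'.2.1]
  · have := congrFun h ⟨v, hvq⟩
    simp only [toConfig_apply] at this
    omega

end GraphOrientation

theorem orientation_superstable_bijection (G : Multigraph V) :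
    Set.BijOn (fun (O : GraphOrientation G) (v : {v : V // v ≠ q}) => (O.indeg v.1 : ℤ) - 1)
      {O : GraphOrientation G | O.Acyclic ∧ O.indeg q = 0 ∧ ∀ v, O.indeg v = 0 → v = q}
      {c : {v : V // v ≠ q} → ℤ | MaximalSuperstableC q G c} := by
  change Set.BijOn (GraphOrientation.toConfig q) {O | O.IsAcyclicWithUniqueSource q} _
  refine ⟨fun O hO => hO.maximalSuperstableC_toConfig, GraphOrientation.toConfig_injOn,
    fun c hc => ?_⟩
  obtain ⟨O, hO, hge⟩ := hc.1.exists_le_toConfig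
  exact ⟨O, hO, hc.2 _ (GraphOrientation.superstableC_toConfig hO.1 hO.2.2) hge⟩
end

section
/- Every maximal unwinnable divisor on G has degree g − 1; consequently every divisor of degree at least g is winnable. -/
open Finset

variable {V : Type} [Fintype V] [DecidableEq V]

/-- A divisor is effective if all its values are nonnegative. -/
def Effective (D : V → ℤ) : Prop := ∀ v, 0 ≤ D v

/-- A divisor is winnable if it is linearly equivalent to an effective divisor. -/
def Winnable (G : Multigraph V) (D : V → ℤ) : Prop :=
  ∃ D' : V → ℤ, LinEquiv G D D' ∧ Effective D'

/-- A maximal unwinnable divisor: unwinnable, but adding one chip at any vertex makes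
it winnable. -/
def MaximalUnwinnable (G : Multigraph V) (D : V → ℤ) : Prop :=
  ¬ Winnable G D ∧ ∀ v : V, Winnable G (fun w => D w + if w = v then 1 else 0)

/-!
Fix a vertex `q`. Every divisor is equivalent to a `q`-reduced one: effective away from `q`,
and such that no nonempty set of vertices avoiding `q` can fire legally (take a firing script
with `q` fixed and maximal total). A `q`-reduced divisor is winnable iff it is nonnegative at
`q`: in a winning script the vertices where the script is maximal would form a legal firing
set. Peeling off, one at a time, vertices that cannot fire shows that a `q`-reduced divisor
has at most `g` chips off `q`, and that with fewer than `g` some vertex other than `q` can take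
one more chip without losing reducedness. So a maximal unwinnable reduced divisor has `-1` at
`q` and exactly `g` chips elsewhere, and a reduced divisor of degree at least `g` is
nonnegative at `q`.
-/

lemma divDeg_eq_add_sum_erase (D : V → ℤ) (q : V) : divDeg D = D q + ∑ v ∈ univ.erase q, D v :=
  (add_sum_erase univ D (mem_univ q)).symm

namespace Multigraph

variable (G : Multigraph V)

def edgesTo (v : V) (S : Finset V) : ℕ := ∑ w ∈ S, G.E v w

section
omit [DecidableEq V]

lemma lap_add (σ τ : V → ℤ) : lap G (σ + τ) = lap G σ + lap G τ := by
  funext v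
  simp only [lap, Pi.add_apply, ← sum_add_distrib]
  exact sum_congr rfl fun w _ => by ring

lemma lap_sub (σ τ : V → ℤ) : lap G (σ - τ) = lap G σ - lap G τ := by
  funext v
  simp only [lap, Pi.sub_apply, ← sum_sub_distrib]
  exact sum_congr rfl fun w _ => by ring

lemma lap_smul (k : ℤ) (σ : V → ℤ) : lap G (k • σ) = k • lap G σ := by
  funext v
  simp only [lap, Pi.smul_apply, smul_eq_mul, mul_sum]
  exact sum_congr rfl fun w _ => by ring

lemma lap_const (c : ℤ) : lap G (fun _ => c) = 0 := by
  funext v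
  simp [lap]

lemma lap_zero : lap G 0 = 0 := lap_const G 0

lemma lap_add_const (σ : V → ℤ) (c : ℤ) : lap G (σ + fun _ => c) = lap G σ := by
  rw [lap_add, lap_const, add_zero]

end

lemma val_eq_edgesTo_add_edgesTo_compl (v : V) (S : Finset V) :
    G.val v = G.edgesTo v S + G.edgesTo v Sᶜ :=
  (sum_add_sum_compl S _).symm

lemma lap_indicator_of_mem {S : Finset V} {v : V} (hv : v ∈ S) :
    lap G ((S : Set V).indicator 1) v = G.edgesTo v Sᶜ := by
  calc lap G ((S : Set V).indicator 1) v = ∑ w, if w ∈ Sᶜ then (G.E v w : ℤ) else 0 :=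
        sum_congr rfl fun w _ => by by_cases hw : w ∈ S <;> simp [hw, hv]
    _ = G.edgesTo v Sᶜ := by rw [sum_ite_mem, univ_inter, edgesTo, Nat.cast_sum]

lemma lap_indicator_of_notMem {S : Finset V} {v : V} (hv : v ∉ S) :
    lap G ((S : Set V).indicator 1) v = -G.edgesTo v S := by
  calc lap G ((S : Set V).indicator 1) v = -∑ w, if w ∈ S then (G.E v w : ℤ) else 0 := by
        rw [← sum_neg_distrib]
        exact sum_congr rfl fun w _ => by by_cases hw : w ∈ S <;> simp [hw, hv]
    _ = -G.edgesTo v S := by rw [sum_ite_mem, univ_inter, edgesTo, Nat.cast_sum]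

lemma lend_eq_sub_lap_single (D : V → ℤ) (v : V) : lend G D v = D - lap G (Pi.single v 1) := by
  funext w
  have hsingle : (Pi.single v 1 : V → ℤ) = (({v} : Finset V) : Set V).indicator 1 := by
    ext u; simp [Pi.single_apply, Set.indicator_apply]
  rw [Pi.sub_apply, hsingle]
  by_cases hw : w = v
  · subst hw
    rw [lap_indicator_of_mem G (mem_singleton_self w), lend, if_pos rfl,
      val_eq_edgesTo_add_edgesTo_compl G w {w}]
    simp [edgesTo, G.loopless]
  · rw [lap_indicator_of_notMem G (by simpa using hw), lend, if_neg hw]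
    simp [edgesTo, G.symm w v]

lemma linEquiv_sub_lap_natCast (σ : V → ℕ) (D : V → ℤ) :
    LinEquiv G D (D - lap G (fun v => σ v)) := by
  induction σ using Pi.single_induction generalizing D with
  | zero =>
    simp only [Pi.zero_apply, Nat.cast_zero, lap_const, sub_zero]
    exact .refl
  | add σ τ hσ hτ =>
    have hsplit : D - lap G (fun v => ((σ + τ) v : ℕ)) =
        D - lap G (fun v => σ v) - lap G (fun v => τ v) := by
      rw [sub_sub, ← lap_add]; congr 2
    rw [hsplit]
    exact (hσ D).trans (hτ _)
  | single v m =>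
    induction m generalizing D with
    | zero =>
      simp only [Pi.single_zero, Pi.zero_apply, Nat.cast_zero, lap_const, sub_zero]
      exact .refl
    | succ m ih =>
      have hsplit : D - lap G (fun w => ((Pi.single v (m + 1) : V → ℕ) w : ℤ)) =
          D - lap G (Pi.single v 1) - lap G (fun w => ((Pi.single v m : V → ℕ) w : ℤ)) := by
        rw [sub_sub, ← lap_add]; congr 2; funext w
        by_cases hw : w = v <;> simp [Pi.single_apply, hw, add_comm]
      rw [hsplit, ← lend_eq_sub_lap_single]
      exact .head ⟨v, rfl⟩ (ih _)

lemma linEquiv_iff {D D' : V → ℤ} : LinEquiv G D D' ↔ ∃ σ, D' = D - lap G σ := by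
  constructor
  · intro h
    induction h with
    | refl => exact ⟨0, by rw [lap_zero, sub_zero]⟩
    | tail _ hstep ih =>
      obtain ⟨σ, rfl⟩ := ih
      obtain ⟨v, rfl⟩ := hstep
      exact ⟨σ + Pi.single v 1, by rw [lend_eq_sub_lap_single, lap_add, sub_sub]⟩
  · rintro ⟨σ, rfl⟩
    -- shifting by a constant makes the script nonnegative without changing its Laplacian
    set c := ∑ v, |σ v|
    have hshift : (fun v => ((σ v + c).toNat : ℤ)) = σ + fun _ => c := by
      funext v
      have : |σ v| ≤ c := single_le_sum (fun w _ => abs_nonneg (σ w)) (mem_univ v)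
      simp only [Pi.add_apply]
      exact Int.toNat_of_nonneg (by linarith [neg_abs_le (σ v)])
    have := linEquiv_sub_lap_natCast G (fun v => (σ v + c).toNat) D
    rwa [hshift, lap_add_const] at this

lemma winnable_iff {D : V → ℤ} : Winnable G D ↔ ∃ σ, Effective (D - lap G σ) := by
  simp only [Winnable, linEquiv_iff]
  constructor
  · rintro ⟨_, ⟨σ, rfl⟩, h⟩
    exact ⟨σ, h⟩
  · rintro ⟨σ, h⟩
    exact ⟨_, ⟨σ, rfl⟩, h⟩

lemma winnable_sub_lap_iff (σ : V → ℤ) {D : V → ℤ} :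
    Winnable G (D - lap G σ) ↔ Winnable G D := by
  simp only [winnable_iff, sub_sub, ← lap_add]
  constructor
  · rintro ⟨τ, h⟩
    exact ⟨σ + τ, h⟩
  · rintro ⟨τ, h⟩
    exact ⟨τ - σ, by simpa using h⟩

lemma maximalUnwinnable_iff {D : V → ℤ} :
    MaximalUnwinnable G D ↔ ¬ Winnable G D ∧ ∀ v, Winnable G (D + Pi.single v 1) := by
  have hsingle : ∀ v, (fun w => D w + if w = v then 1 else 0) = D + Pi.single v 1 := by
    intro v; funext w; simp [Pi.single_apply]
  simp only [MaximalUnwinnable, hsingle]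

lemma maximalUnwinnable_sub_lap_iff (σ : V → ℤ) {D : V → ℤ} :
    MaximalUnwinnable G (D - lap G σ) ↔ MaximalUnwinnable G D := by
  simp only [maximalUnwinnable_iff, sub_add_eq_add_sub, winnable_sub_lap_iff]

def Superstable (A : Finset V) (D : V → ℤ) : Prop :=
  ∀ S ⊆ A, S.Nonempty → ∃ v ∈ S, D v < G.edgesTo v Sᶜ

def IsReduced (q : V) (D : V → ℤ) : Prop :=
  (∀ v, v ≠ q → 0 ≤ D v) ∧ G.Superstable (univ.erase q) D

variable {G}

omit [Fintype V] [DecidableEq V] in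
lemma Connected.exists_crossing_edge (hG : G.Connected) {S : Finset V} {x y : V}
    (hx : x ∈ S) (hy : y ∉ S) : ∃ a ∈ S, ∃ b ∉ S, 0 < G.E a b := by
  induction hG x y with
  | refl => exact absurd hx hy
  | @tail c d _ hcd ih =>
    by_cases hc : c ∈ S
    · exact ⟨c, hc, d, hy, hcd⟩
    · exact ih hc

variable (G)

lemma sum_lap_eq_sum_cut (S : Finset V) (σ : V → ℤ) :
    ∑ w ∈ S, lap G σ w = ∑ w ∈ S, ∑ u ∈ Sᶜ, (G.E w u : ℤ) * (σ w - σ u) := by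
  have hinner : ∑ w ∈ S, ∑ u ∈ S, (G.E w u : ℤ) * (σ w - σ u) = 0 := by
    simp only [mul_sub, sum_sub_distrib]
    rw [sub_eq_zero, sum_comm]
    simp only [G.symm]
  simp only [lap, ← sum_add_sum_compl S, sum_add_distrib, hinner, zero_add]

lemma divDeg_sub_lap (σ : V → ℤ) {D : V → ℤ} : divDeg (D - lap G σ) = divDeg D := by
  have hlap : ∑ v, lap G σ v = 0 := by simp [sum_lap_eq_sum_cut]
  simp only [divDeg, Pi.sub_apply, sum_sub_distrib, hlap, sub_zero]

lemma exists_sub_lap_nonneg_on (hG : G.Connected) (D : V → ℤ) {q : V} (U : Finset V)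
    (hq : q ∉ U) : ∃ σ, ∀ v ∈ U, 0 ≤ (D - lap G σ) v := by
  induction U using Finset.strongInduction with
  | H U ih =>
    rcases U.eq_empty_or_nonempty with rfl | ⟨x, hx⟩
    · exact ⟨0, by simp⟩
    obtain ⟨a, ha, b, hb, hab⟩ := hG.exists_crossing_edge hx hq
    obtain ⟨σ, hσ⟩ := ih (U.erase a) (erase_ssubset ha) (fun h => hq (mem_of_mem_erase h))
    -- when `U` borrows `k` times no vertex of `U` loses chips, and `a` gains `k` through `ab`
    set k := max 0 (-(D - lap G σ) a)
    refine ⟨σ - k • (U : Set V).indicator 1, fun v hv => ?_⟩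
    have hfire : (D - lap G (σ - k • (U : Set V).indicator 1)) v
        = (D - lap G σ) v + k * G.edgesTo v Uᶜ := by
      rw [lap_sub, lap_smul]
      simp only [Pi.sub_apply, Pi.smul_apply, smul_eq_mul, lap_indicator_of_mem G hv]
      ring
    have hk : 0 ≤ k := le_max_left _ _
    rw [hfire]
    by_cases hva : v = a
    · subst hva
      have hedge : 1 ≤ (G.edgesTo v Uᶜ : ℤ) := by
        have : G.E v b ≤ G.edgesTo v Uᶜ :=
          single_le_sum (fun _ _ => Nat.zero_le _) (mem_compl.2 hb)
        omega
      nlinarith [le_max_right 0 (-(D - lap G σ) v)]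
    · have := hσ v (mem_erase.2 ⟨hva, hv⟩)
      positivity

lemma exists_lt_le_add_of_lap_le (hG : G.Connected) {q : V} {D σ : V → ℤ}
    (hlap : ∀ w, w ≠ q → lap G σ w ≤ D w) {v : V} (hv : σ q < σ v) :
    ∃ b, σ b < σ v ∧ σ v ≤ σ b + ∑ w, |D w| := by
  set S := univ.filter (fun w => σ v ≤ σ w)
  have hqS : q ∉ S := by simpa [S] using hv
  obtain ⟨a, haS, b, hbS, hab⟩ := hG.exists_crossing_edge (x := v) (by simp [S]) hqS
  have hcross : ∀ w ∈ S, ∀ u ∈ Sᶜ, σ u < σ w := by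
    intro w hw u hu
    simp only [S, mem_compl, mem_filter, mem_univ, true_and, not_le] at hw hu
    omega
  have hb : σ b < σ a := hcross a haS b (mem_compl.2 hbS)
  refine ⟨b, by simpa [S] using hbS, ?_⟩
  have hterm : ∀ w ∈ S, ∀ u ∈ Sᶜ, 0 ≤ (G.E w u : ℤ) * (σ w - σ u) :=
    fun w hw u hu => mul_nonneg (Int.natCast_nonneg _) (sub_nonneg.2 (hcross w hw u hu).le)
  have hab' : σ a - σ b ≤ (G.E a b : ℤ) * (σ a - σ b) :=
    le_mul_of_one_le_left (by omega) (by exact_mod_cast hab)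
  calc σ v ≤ σ b + (σ a - σ b) := by simp only [add_sub_cancel]; simpa [S] using haS
    _ ≤ σ b + ∑ w ∈ S, ∑ u ∈ Sᶜ, (G.E w u : ℤ) * (σ w - σ u) := by
        gcongr
        calc σ a - σ b ≤ (G.E a b : ℤ) * (σ a - σ b) := hab'
          _ ≤ ∑ u ∈ Sᶜ, (G.E a u : ℤ) * (σ a - σ u) :=
            single_le_sum (hterm a haS) (mem_compl.2 hbS)
          _ ≤ _ := single_le_sum (fun w hw => sum_nonneg (hterm w hw)) haS
    _ = σ b + ∑ w ∈ S, lap G σ w := by rw [sum_lap_eq_sum_cut]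
    _ ≤ σ b + ∑ w ∈ S, |D w| := by
        gcongr with w hw
        exact (hlap w (fun h => hqS (h ▸ hw))).trans (le_abs_self _)
    _ ≤ σ b + ∑ w, |D w| := by
        gcongr
        exact subset_univ S

omit [DecidableEq V] in
lemma le_add_mul_card_of_gaps (f : V → ℤ) (q : V) {C : ℤ} (hC : 0 ≤ C)
    (hgap : ∀ v, f q < f v → ∃ b, f b < f v ∧ f v ≤ f b + C) (v : V) :
    f v ≤ f q + C * Fintype.card V := by
  have key : ∀ v, f v ≤ f q + C * #(univ.filter (f · < f v)) := by
    intro v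
    induction v using (measure fun v => #(univ.filter (f · < f v))).wf.induction with
    | h v ih =>
      by_cases hv : f v ≤ f q
      · nlinarith
      obtain ⟨b, hbv, hvb⟩ := hgap v (not_le.1 hv)
      have hlt : #(univ.filter (f · < f b)) < #(univ.filter (f · < f v)) := by
        refine card_lt_card ((ssubset_iff_of_subset fun w hw => ?_).2 ⟨b, ?_, ?_⟩)
        · simp only [mem_filter, mem_univ, true_and] at hw ⊢
          exact hw.trans hbv
        · simpa using hbv
        · simp
      have := ih b hlt
      have : (#(univ.filter (f · < f b)) : ℤ) + 1 ≤ #(univ.filter (f · < f v)) := by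
        exact_mod_cast hlt
      nlinarith
  calc f v ≤ f q + C * #(univ.filter (f · < f v)) := key v
    _ ≤ f q + C * Fintype.card V := by gcongr; exact card_le_univ _

lemma Connected.exists_isReduced {G : Multigraph V} (hG : G.Connected) (q : V) (D : V → ℤ) :
    ∃ σ, G.IsReduced q (D - lap G σ) := by
  set Admissible : (V → ℤ) → Prop := fun σ => σ q = 0 ∧ ∀ w, w ≠ q → 0 ≤ (D - lap G σ) w
  have hsum_bdd : ∃ B : ℤ, ∀ s, (∃ σ, Admissible σ ∧ ∑ v, σ v = s) → s ≤ B := by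
    refine ⟨Fintype.card V * ((∑ w, |D w|) * Fintype.card V), ?_⟩
    rintro s ⟨σ, ⟨hq, hσ⟩, rfl⟩
    have hlap : ∀ w, w ≠ q → lap G σ w ≤ D w := fun w hw => sub_nonneg.1 (hσ w hw)
    have hbound := le_add_mul_card_of_gaps σ q (sum_nonneg fun w _ => abs_nonneg (D w))
      (fun v hv => exists_lt_le_add_of_lap_le G hG hlap hv)
    calc ∑ v, σ v ≤ ∑ _v : V, (∑ w, |D w|) * Fintype.card V :=
          sum_le_sum fun v _ => by simpa [hq] using hbound v
      _ = _ := by simp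
  have hne : ∃ s, ∃ σ, Admissible σ ∧ ∑ v, σ v = s := by
    obtain ⟨σ, hσ⟩ := exists_sub_lap_nonneg_on G hG D (univ.erase q) (notMem_erase q univ)
    refine ⟨_, σ + fun _ => -σ q, ⟨by simp, fun w hw => ?_⟩, rfl⟩
    simpa [lap_add_const] using hσ w (mem_erase.2 ⟨hw, mem_univ w⟩)
  obtain ⟨s, ⟨σ, ⟨hq, hσ⟩, rfl⟩, hmax⟩ := Int.exists_greatest_of_bdd hsum_bdd hne
  refine ⟨σ, hσ, fun S hSq hSne => ?_⟩
  by_contra! hlegal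
  -- firing the set `S` would keep the script admissible and increase its sum
  have hqS : q ∉ S := fun h => by simpa using hSq h
  have hfire : Admissible (σ + (S : Set V).indicator 1) := by
    refine ⟨by simp [hq, hqS], fun w hw => ?_⟩
    rw [lap_add, ← sub_sub, Pi.sub_apply]
    by_cases hwS : w ∈ S
    · rw [lap_indicator_of_mem G hwS]
      exact sub_nonneg.2 (hlegal w hwS)
    · rw [lap_indicator_of_notMem G hwS]
      linarith [hσ w hw, (G.edgesTo w S).cast_nonneg (α := ℤ)]
  have := hmax _ ⟨_, hfire, rfl⟩
  have hcard : ∑ v, (σ + (S : Set V).indicator 1 : V → ℤ) v = ∑ v, σ v + #S := by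
    simp [sum_add_distrib, Set.indicator_apply]
  linarith [card_pos.2 hSne]

omit [DecidableEq V] in
lemma edgesTo_le_lap_of_forall_le {σ : V → ℤ} {v : V} (hmax : ∀ w, σ w ≤ σ v) {T : Finset V}
    (hT : ∀ w ∈ T, σ w < σ v) : (G.edgesTo v T : ℤ) ≤ lap G σ v := by
  have hterm : ∀ w, 0 ≤ (G.E v w : ℤ) * (σ v - σ w) :=
    fun w => mul_nonneg (Int.natCast_nonneg _) (sub_nonneg.2 (hmax w))
  calc (G.edgesTo v T : ℤ) ≤ ∑ w ∈ T, (G.E v w : ℤ) * (σ v - σ w) := by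
        rw [edgesTo, Nat.cast_sum]
        exact sum_le_sum fun w hw =>
          le_mul_of_one_le_right (Int.natCast_nonneg _) (by linarith [hT w hw])
    _ ≤ lap G σ v := sum_le_sum_of_subset_of_nonneg (subset_univ T) fun w _ _ => hterm w

variable {G}

lemma Superstable.mono {A B : Finset V} {D : V → ℤ} (h : G.Superstable A D) (hBA : B ⊆ A) :
    G.Superstable B D :=
  fun S hS => h S (hS.trans hBA)

lemma Superstable.congr {A : Finset V} {D D' : V → ℤ} (h : G.Superstable A D)
    (hDD' : ∀ v ∈ A, D v = D' v) : G.Superstable A D' := by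
  intro S hS hSne
  obtain ⟨v, hv, hlt⟩ := h S hS hSne
  exact ⟨v, hv, hDD' v (hS hv) ▸ hlt⟩

lemma Superstable.of_erase {S : Finset V} {D : V → ℤ} {a : V}
    (h : G.Superstable (S.erase a) D) (ha : D a < G.edgesTo a Sᶜ) : G.Superstable S D := by
  intro T hTS hTne
  by_cases haT : a ∈ T
  · refine ⟨a, haT, ha.trans_le ?_⟩
    exact_mod_cast sum_le_sum_of_subset (compl_subset_compl.2 hTS)
  · exact h T (fun w hw => mem_erase.2 ⟨fun h => haT (h ▸ hw), hTS hw⟩) hTne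

/-- The vertices where a winning script is maximal would form a legal firing set, unless they
include `q`, whose Laplacian is then nonnegative. -/
lemma Superstable.not_winnable {q : V} {D : V → ℤ} (h : G.Superstable (univ.erase q) D)
    (hq : D q < 0) : ¬ Winnable G D := by
  rw [winnable_iff]
  rintro ⟨σ, heff⟩
  have : Nonempty V := ⟨q⟩
  obtain ⟨v, hv⟩ := Finite.exists_max σ
  set A := univ.filter (fun w => σ w = σ v)
  by_cases hqA : q ∈ A
  · have hσq : σ q = σ v := by simpa [A] using hqA
    have := edgesTo_le_lap_of_forall_le G (T := ∅) (fun w => hσq ▸ hv w) (by simp)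
    linarith [heff q, Pi.sub_apply D (lap G σ) q]
  · obtain ⟨u, huA, hu⟩ := h A (fun w hw => mem_erase.2 ⟨fun h => hqA (h ▸ hw), mem_univ w⟩)
      ⟨v, by simp [A]⟩
    have hσu : σ u = σ v := by simpa [A] using huA
    have := edgesTo_le_lap_of_forall_le G (T := Aᶜ) (fun w => hσu ▸ hv w) fun w hw => by
      simp only [A, mem_compl, mem_filter, mem_univ, true_and] at hw
      exact hσu ▸ lt_of_le_of_ne (hv w) hw
    linarith [heff u, Pi.sub_apply D (lap G σ) u]

variable (G)

-- Summing `val v + edgesTo v Sᶜ` over `S` counts every edge meeting `S` twice.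
def twiceMaxDegOn (S : Finset V) : ℤ := ∑ v ∈ S, ((G.val v : ℤ) + G.edgesTo v Sᶜ - 2)

lemma twiceMaxDegOn_eq_erase {S : Finset V} {a : V} (ha : a ∈ S) :
    G.twiceMaxDegOn S = G.twiceMaxDegOn (S.erase a) + 2 * ((G.edgesTo a Sᶜ : ℤ) - 1) := by
  have hcompl : (S.erase a)ᶜ = insert a Sᶜ := compl_erase
  have hinsert : ∀ v, (G.edgesTo v (S.erase a)ᶜ : ℤ) = G.E v a + G.edgesTo v Sᶜ := by
    intro v
    rw [hcompl, edgesTo, sum_insert (by simpa using ha)]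
    push_cast [edgesTo]
    rfl
  have hval : (G.val a : ℤ) = G.edgesTo a (S.erase a) + G.edgesTo a Sᶜ := by
    rw [val_eq_edgesTo_add_edgesTo_compl G a (S.erase a), Nat.cast_add, hinsert, G.loopless]
    simp
  have hsymm : ∑ v ∈ S.erase a, (G.E v a : ℤ) = G.edgesTo a (S.erase a) := by
    simp [edgesTo, G.symm _ a]
  have hsum : ∑ v ∈ S.erase a, ((G.val v : ℤ) + G.edgesTo v (S.erase a)ᶜ - 2)
      = ∑ v ∈ S.erase a, ((G.val v : ℤ) + G.edgesTo v Sᶜ - 2) + G.edgesTo a (S.erase a) := by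
    rw [← hsymm, ← sum_add_distrib]
    exact sum_congr rfl fun v _ => by rw [hinsert]; ring
  rw [twiceMaxDegOn, twiceMaxDegOn, ← add_sum_erase S _ ha, hsum, hval]
  ring

lemma two_mul_edgeCount : 2 * edgeCount G = ∑ v, G.val v := by
  have heven : ∀ s : Finset V, Even (∑ u ∈ s, ∑ w ∈ s, G.E u w) := by
    intro s
    induction s using Finset.induction_on with
    | empty => simp
    | insert a s ha ih =>
      rw [sum_insert ha, sum_insert ha, G.loopless, zero_add]
      simp only [sum_insert ha, sum_add_distrib, G.symm _ a]
      rw [← add_assoc]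
      exact (Even.add_self _).add ih
  exact Nat.two_mul_div_two_of_even (heven univ)

lemma twiceMaxDegOn_univ_erase (q : V) : G.twiceMaxDegOn (univ.erase q) = 2 * genus G := by
  have huniv := G.twiceMaxDegOn_eq_erase (mem_univ q)
  have htotal : G.twiceMaxDegOn univ = 2 * edgeCount G - 2 * Fintype.card V := by
    have : (∑ v, G.val v : ℤ) = 2 * edgeCount G := by exact_mod_cast G.two_mul_edgeCount.symm
    simp [twiceMaxDegOn, edgesTo, sum_sub_distrib, this, mul_comm]
  have hq : G.edgesTo q univᶜ = 0 := by simp [edgesTo]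
  rw [htotal, hq, Nat.cast_zero] at huniv
  rw [genus]
  linarith

variable {G}

lemma Superstable.two_mul_sum_le {S : Finset V} {D : V → ℤ} (h : G.Superstable S D) :
    2 * ∑ v ∈ S, D v ≤ G.twiceMaxDegOn S := by
  induction S using Finset.strongInduction with
  | H S ih =>
    rcases S.eq_empty_or_nonempty with rfl | hne
    · simp [twiceMaxDegOn]
    obtain ⟨a, ha, hlt⟩ := h S subset_rfl hne
    have := ih (S.erase a) (erase_ssubset ha) (h.mono (erase_subset a S))
    rw [← add_sum_erase S D ha, G.twiceMaxDegOn_eq_erase ha]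
    linarith

lemma Superstable.exists_add_single {S : Finset V} {D : V → ℤ} (h : G.Superstable S D)
    (hlt : 2 * ∑ v ∈ S, D v < G.twiceMaxDegOn S) :
    ∃ v ∈ S, G.Superstable S (D + Pi.single v 1) := by
  induction S using Finset.strongInduction with
  | H S ih =>
    rcases S.eq_empty_or_nonempty with rfl | hne
    · simp [twiceMaxDegOn] at hlt
    obtain ⟨a, ha, hDa⟩ := h S subset_rfl hne
    have hoff : ∀ v, ∀ w ≠ v, (D + Pi.single v 1 : V → ℤ) w = D w := fun v w hw => by simp [hw]
    by_cases hroom : D a + 1 < G.edgesTo a Sᶜ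
    · refine ⟨a, ha, Superstable.of_erase (a := a) ?_ (by simpa using hroom)⟩
      exact (h.mono (erase_subset a S)).congr fun w hw => (hoff a w (ne_of_mem_erase hw)).symm
    · have hlt' : 2 * ∑ v ∈ S.erase a, D v < G.twiceMaxDegOn (S.erase a) := by
        rw [← add_sum_erase S D ha, G.twiceMaxDegOn_eq_erase ha] at hlt
        linarith
      obtain ⟨v, hv, hvs⟩ := ih (S.erase a) (erase_ssubset ha) (h.mono (erase_subset a S)) hlt'
      exact ⟨v, mem_of_mem_erase hv,
        hvs.of_erase (by rwa [hoff v a (ne_of_mem_erase hv).symm])⟩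

lemma IsReduced.winnable_iff {q : V} {D : V → ℤ} (h : G.IsReduced q D) :
    Winnable G D ↔ 0 ≤ D q := by
  refine ⟨fun hw => not_lt.1 fun hq => h.2.not_winnable hq hw, fun hq => ?_⟩
  refine (G.winnable_iff).2 ⟨0, fun v => ?_⟩
  rw [lap_zero, sub_zero]
  by_cases hv : v = q
  · exact hv ▸ hq
  · exact h.1 v hv

lemma IsReduced.sum_le_genus {q : V} {D : V → ℤ} (h : G.IsReduced q D) :
    ∑ v ∈ univ.erase q, D v ≤ genus G := by
  have := h.2.two_mul_sum_le
  rw [twiceMaxDegOn_univ_erase] at this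
  linarith

lemma IsReduced.add_single_self {q : V} {D : V → ℤ} (h : G.IsReduced q D) :
    G.IsReduced q (D + Pi.single q 1) := by
  have hoff : ∀ v, v ≠ q → (D + Pi.single q 1 : V → ℤ) v = D v := fun v hv => by simp [hv]
  exact ⟨fun v hv => hoff v hv ▸ h.1 v hv,
    h.2.congr fun v hv => (hoff v (ne_of_mem_erase hv)).symm⟩

lemma IsReduced.exists_add_single {q : V} {D : V → ℤ} (h : G.IsReduced q D)
    (hlt : ∑ v ∈ univ.erase q, D v < genus G) :
    ∃ v, v ≠ q ∧ G.IsReduced q (D + Pi.single v 1) := by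
  obtain ⟨v, hv, hvs⟩ := h.2.exists_add_single (by rw [twiceMaxDegOn_univ_erase]; linarith)
  refine ⟨v, ne_of_mem_erase hv, fun w hw => ?_, hvs⟩
  have hsingle : (0 : V → ℤ) ≤ Pi.single v 1 := Pi.single_nonneg.2 zero_le_one
  exact add_nonneg (h.1 w hw) (hsingle w)

lemma IsReduced.divDeg_eq_of_maximalUnwinnable {q : V} {D : V → ℤ} (h : G.IsReduced q D)
    (hmax : MaximalUnwinnable G D) : divDeg D = genus G - 1 := by
  rw [maximalUnwinnable_iff] at hmax
  obtain ⟨hunwin, hwin⟩ := hmax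
  have hq : D q < 0 := not_le.1 (mt h.winnable_iff.2 hunwin)
  have hq' : 0 ≤ D q + 1 := by simpa using h.add_single_self.winnable_iff.1 (hwin q)
  have hsum : ∑ v ∈ univ.erase q, D v = genus G := by
    refine le_antisymm h.sum_le_genus (not_lt.1 fun hlt => ?_)
    obtain ⟨v, hvq, hv⟩ := h.exists_add_single hlt
    exact not_le.2 (by simpa [hvq.symm] using hq) (hv.winnable_iff.1 (hwin v))
  rw [divDeg_eq_add_sum_erase D q, hsum]
  omega

end Multigraph

/-- Every maximal unwinnable divisor has degree `g - 1`; consequently every divisor of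
degree at least `g` is winnable. -/
theorem maximal_unwinnable_degree (G : Multigraph V) (hG : G.Connected) (D : V → ℤ) :
    (MaximalUnwinnable G D → divDeg D = genus G - 1) ∧
    (genus G ≤ divDeg D → Winnable G D) := by
  cases isEmpty_or_nonempty V with
  | inl _ =>
    have hwin : Winnable G D := ⟨D, .refl, isEmptyElim⟩
    exact ⟨fun h => absurd hwin h.1, fun _ => hwin⟩
  | inr hne =>
    obtain ⟨q⟩ := hne
    obtain ⟨σ, hred⟩ := hG.exists_isReduced q D
    rw [← G.maximalUnwinnable_sub_lap_iff σ, ← G.winnable_sub_lap_iff σ, ← G.divDeg_sub_lap σ]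
    refine ⟨hred.divDeg_eq_of_maximalUnwinnable, fun hdeg => hred.winnable_iff.2 ?_⟩
    rw [divDeg_eq_add_sum_erase _ q] at hdeg
    linarith [hred.sum_le_genus]
end
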